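/- Area of a circular segment: for the unit circle and a chord at height h with 0 ≤ h < 1, the area of the region {(x,y) : x² + y² ≤ 1, y ≥ h} equals arccos(h) − h·√(1 − h²). -/
import Mathlib


open MeasureTheory Real intervalIntegral

lemma integral_sqrt_one_sub_sq_gen (a : ℝ) (ha0 : 0 ≤ a) (ha1 : a ≤ 1) :
    ∫ x in (-a)..a, Real.sqrt (1 - x ^ 2) = arcsin a + a * Real.sqrt (1 - a ^ 2) := by
  have hθ0 : 0 ≤ arcsin a := Real.arcsin_nonneg.2 ha0
  have hθ : arcsin a ≤ π / 2 := Real.arcsin_le_pi_div_two a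
  have hsin : Real.sin (arcsin a) = a := Real.sin_arcsin (by linarith) ha1
  have hcos : Real.cos (arcsin a) = Real.sqrt (1 - a ^ 2) := Real.cos_arcsin a
  calc ∫ x in (-a)..a, Real.sqrt (1 - x ^ 2)
      = ∫ x in Real.sin (-(arcsin a))..Real.sin (arcsin a), Real.sqrt (1 - x ^ 2) := by
        rw [Real.sin_neg, hsin]
    _ = ∫ x in (-(arcsin a))..(arcsin a), Real.sqrt (1 - Real.sin x ^ 2) * Real.cos x :=
        (integral_comp_mul_deriv (fun x _ => Real.hasDerivAt_sin x) Real.continuousOn_cos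
          (by fun_prop)).symm
    _ = ∫ x in (-(arcsin a))..(arcsin a), Real.cos x ^ 2 := by
        refine integral_congr_ae (MeasureTheory.ae_of_all _ fun x hx => ?_)
        rw [Set.uIoc_of_le (neg_le_self hθ0), Set.mem_Ioc] at hx
        rw [← Real.cos_eq_sqrt_one_sub_sin_sq (by linarith [hx.1]) (le_trans hx.2 hθ), pow_two]
    _ = arcsin a + a * Real.sqrt (1 - a ^ 2) := by
        rw [integral_cos_sq, Real.cos_neg, Real.sin_neg, hsin, hcos]; ring

/-- Area of a circular segment: for `0 ≤ h < 1`, the area of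
`{(x,y) : x² + y² ≤ 1, y ≥ h}` equals `arccos h − h√(1−h²)`. -/
theorem area_circular_segment (h : ℝ) (h0 : 0 ≤ h) (h1 : h < 1) :
    (volume {p : ℝ × ℝ | p.1 ^ 2 + p.2 ^ 2 ≤ 1 ∧ h ≤ p.2}).toReal
      = arccos h - h * Real.sqrt (1 - h ^ 2) := by
  set a : ℝ := Real.sqrt (1 - h ^ 2) with ha_def
  have ha0 : 0 ≤ a := Real.sqrt_nonneg _
  have hh2 : h ^ 2 ≤ 1 := by nlinarith
  have ha2 : a ^ 2 = 1 - h ^ 2 := Real.sq_sqrt (by nlinarith)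
  have ha1 : a ≤ 1 := by nlinarith
  have hha : Real.sqrt (1 - a ^ 2) = h := by
    rw [ha2, show 1 - (1 - h ^ 2) = h ^ 2 by ring, Real.sqrt_sq h0]
  have hS : MeasurableSet {p : ℝ × ℝ | p.1 ^ 2 + p.2 ^ 2 ≤ 1 ∧ h ≤ p.2} := by
    exact (measurableSet_le ((measurable_fst.pow_const 2).add (measurable_snd.pow_const 2))
      measurable_const).inter (measurableSet_le measurable_const measurable_snd)
  have hnn : ∀ x ∈ Set.Icc (-a) a, 0 ≤ Real.sqrt (1 - x ^ 2) - h := by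
    intro x hx
    have hx2 : x ^ 2 ≤ a ^ 2 := sq_le_sq' hx.1 hx.2
    have : h = Real.sqrt (h ^ 2) := (Real.sqrt_sq h0).symm
    rw [this]
    have : Real.sqrt (h ^ 2) ≤ Real.sqrt (1 - x ^ 2) := Real.sqrt_le_sqrt (by nlinarith)
    linarith
  have hsec : ∀ x : ℝ, volume (Prod.mk x ⁻¹' {p : ℝ × ℝ | p.1 ^ 2 + p.2 ^ 2 ≤ 1 ∧ h ≤ p.2})
      = Set.indicator (Set.Icc (-a) a)
          (fun x => ENNReal.ofReal (Real.sqrt (1 - x ^ 2) - h)) x := by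
    intro x
    by_cases hx : x ∈ Set.Icc (-a) a
    · rw [Set.indicator_of_mem hx]
      have hx2 : x ^ 2 ≤ a ^ 2 := sq_le_sq' hx.1 hx.2
      have h1x : h ^ 2 ≤ 1 - x ^ 2 := by nlinarith
      have hpre : Prod.mk x ⁻¹' {p : ℝ × ℝ | p.1 ^ 2 + p.2 ^ 2 ≤ 1 ∧ h ≤ p.2}
          = Set.Icc h (Real.sqrt (1 - x ^ 2)) := by
        ext y
        simp only [Set.mem_preimage, Set.mem_setOf_eq, Set.mem_Icc]
        constructor
        · rintro ⟨hy1, hy2⟩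
          exact ⟨hy2, (Real.le_sqrt (le_trans h0 hy2) (by nlinarith)).2 (by nlinarith)⟩
        · rintro ⟨hy1, hy2⟩
          have hy0 : 0 ≤ y := le_trans h0 hy1
          have : y ^ 2 ≤ 1 - x ^ 2 := (Real.le_sqrt hy0 (by nlinarith)).1 hy2
          exact ⟨by linarith, hy1⟩
      rw [hpre, Real.volume_Icc]
    · rw [Set.indicator_of_notMem hx]
      have hpre : Prod.mk x ⁻¹' {p : ℝ × ℝ | p.1 ^ 2 + p.2 ^ 2 ≤ 1 ∧ h ≤ p.2} = ∅ := by
        ext y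
        simp only [Set.mem_preimage, Set.mem_setOf_eq, Set.mem_empty_iff_false, iff_false,
          not_and, not_le]
        intro hy1
        by_contra hy2
        push_neg at hy2
        have hy0 : 0 ≤ y := le_trans h0 hy2
        rw [Set.mem_Icc, not_and_or] at hx
        push_neg at hx
        rcases hx with hx | hx
        · nlinarith
        · nlinarith
      rw [hpre]; simp
  have hcont : ContinuousOn (fun x : ℝ => Real.sqrt (1 - x ^ 2) - h) (Set.Icc (-a) a) := by
    fun_prop
  have hint : IntegrableOn (fun x : ℝ => Real.sqrt (1 - x ^ 2) - h) (Set.Icc (-a) a) volume :=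
    hcont.integrableOn_compact isCompact_Icc
  rw [MeasureTheory.Measure.volume_eq_prod, MeasureTheory.Measure.prod_apply hS]
  rw [lintegral_congr hsec, lintegral_indicator measurableSet_Icc _,
    ← MeasureTheory.ofReal_integral_eq_lintegral_ofReal hint
      ((ae_restrict_iff' measurableSet_Icc).2 (MeasureTheory.ae_of_all _ hnn))]
  rw [ENNReal.toReal_ofReal (setIntegral_nonneg measurableSet_Icc hnn)]
  rw [MeasureTheory.integral_Icc_eq_integral_Ioc,
    ← intervalIntegral.integral_of_le (by linarith : -a ≤ a)]
  rw [intervalIntegral.integral_sub ((by fun_prop : Continuous fun x : ℝ =>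
      Real.sqrt (1 - x ^ 2)).intervalIntegrable _ _) (intervalIntegrable_const),
    integral_sqrt_one_sub_sq_gen a ha0 ha1, intervalIntegral.integral_const, hha,
    Real.arccos_eq_arcsin h0, ← ha_def]
  simp only [smul_eq_mul]
  ring
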